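/- Define f̃: ℤ[σ_1,...,σ_{n-k}, e_1,...,e_n] → ℤ[σ_1,...,σ_{n-k}, e_1,...,e_n, q] by f̃(σ_i) = σ_i, f̃(e_i) = e_i for 1 ≤ i ≤ n−1, and f̃(e_n) = e_n + (−1)^k q. Let Ŷ_r = det(σ̂_{1+j−i})_{1≤i,j≤r} where σ̂_m are determined from σ_1,...,σ_{n-k} and e_1,...,e_n by the recursion ∑_{i=0}^{m} e_i σ̂_{m−i} = σ̃_m with σ̃_m = σ_m for m ≤ n−k and σ̃_m = 0 for m > n−k. Then f̃ maps the ideal (Ŷ_{k+1},...,Ŷ_{n−1}, Ŷ_n) into the ideal (Ŷ_{k+1},...,Ŷ_{n−1}, Ŷ_n + (−1)^{n−k} q), and hence descends to a ring homomorphism from the equivariant cohomology presentation ℤ[σ,e]/(Ŷ_{k+1},...,Ŷ_n) to the equivariant quantum presentation ℤ[σ,e,q]/(Ŷ_{k+1},...,Ŷ_n + (−1)^{n−k} q). -/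

import Mathlib

/-!
`f̃` only moves `e_n`. The recursion for `σ̂_m` involves `e_i` only for `i ≤ m`, and `e_n` only
through the term `e_n σ̂_0` when `m = n`; so `f̃` fixes `σ̂_m` for `m < n`, hence `Ŷ_r` for `r < n`,
and shifts `σ̂_n` by `-(-1)^k q`. In the Toeplitz matrix of `Ŷ_n` the entry `σ̂_n` sits only in
the top-right corner, whose complementary minor is unitriangular, so `Ŷ_n` shifts by
`(-1)^(n-1) · (-(-1)^k q) = (-1)^(n-k) q`.
-/

open MvPolynomial

/-- Given sequences `e` and `st` (with `st` playing the role of `σ̃`), `shat e st` is the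
sequence `σ̂` determined by the recursion `σ̃_m = ∑_{i=0}^{m} e_i σ̂_{m-i}` (assuming
`e 0 = 1`), i.e. `σ̂_m = σ̃_m - ∑_{i=1}^{m} e_i σ̂_{m-i}`. -/
noncomputable def shat {R : Type*} [CommRing R] (e st : ℕ → R) : ℕ → R
  | r => st r - ∑ i : Fin r, e (r - i.val) * shat e st i.val
termination_by r => r
decreasing_by exact i.isLt

/-- `σ̂` extended to integer indices, vanishing for negative indices. -/
noncomputable def shatZ {R : Type*} [CommRing R] (e st : ℕ → R) (m : ℤ) : R :=
  if 0 ≤ m then shat e st m.toNat else 0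

/-- The equivariant Giambelli determinant `Ŷ_r = det (σ̂_{1+j-i})_{1 ≤ i,j ≤ r}`. -/
noncomputable def Yhat {R : Type*} [CommRing R] (e st : ℕ → R) (r : ℕ) : R :=
  Matrix.det (Matrix.of fun i j : Fin r => shatZ e st (1 + (j.val : ℤ) - (i.val : ℤ)))

/-- The ambient ring `ℤ[σ_1, ..., σ_{n-k}, e_1, ..., e_n]` of the equivariant
presentation. -/
abbrev EqRing (n k : ℕ) := MvPolynomial (Fin (n - k) ⊕ Fin n) ℤ

/-- The ambient ring `ℤ[σ_1, ..., σ_{n-k}, e_1, ..., e_n, q]` of the equivariant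
quantum presentation. -/
abbrev EqQRing (n k : ℕ) := MvPolynomial ((Fin (n - k) ⊕ Fin n) ⊕ Unit) ℤ

/-- `e_i` in the equivariant ring: `e_0 = 1`, variables for `1 ≤ i ≤ n`, `0` beyond. -/
noncomputable def eSrc (n k : ℕ) : ℕ → EqRing n k := fun i =>
  if i = 0 then 1 else if h : i - 1 < n then X (Sum.inr ⟨i - 1, h⟩) else 0

/-- `σ̃_m` in the equivariant ring: `σ̃_0 = 1`, `σ̃_m = σ_m` for `1 ≤ m ≤ n - k`,
`σ̃_m = 0` for `m > n - k`. -/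
noncomputable def stSrc (n k : ℕ) : ℕ → EqRing n k := fun m =>
  if m = 0 then 1 else if h : m - 1 < n - k then X (Sum.inl ⟨m - 1, h⟩) else 0

/-- `e_i` in the equivariant quantum ring. -/
noncomputable def eTgt (n k : ℕ) : ℕ → EqQRing n k := fun i =>
  if i = 0 then 1 else if h : i - 1 < n then X (Sum.inl (Sum.inr ⟨i - 1, h⟩)) else 0

/-- `σ̃_m` in the equivariant quantum ring. -/
noncomputable def stTgt (n k : ℕ) : ℕ → EqQRing n k := fun m =>
  if m = 0 then 1 else if h : m - 1 < n - k then X (Sum.inl (Sum.inl ⟨m - 1, h⟩)) else 0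

/-- The quantum variable `q`. -/
noncomputable def qv (n k : ℕ) : EqQRing n k := X (Sum.inr ())

/-- The map `f̃ : ℤ[σ, e] → ℤ[σ, e, q]` with `f̃(σ_i) = σ_i`, `f̃(e_i) = e_i` for
`1 ≤ i ≤ n - 1`, and `f̃(e_n) = e_n + (-1)^k q`. -/
noncomputable def ftilde (n k : ℕ) : EqRing n k →+* EqQRing n k :=
  (MvPolynomial.aeval (fun v : Fin (n - k) ⊕ Fin n =>
    match v with
    | Sum.inl i => (X (Sum.inl (Sum.inl i)) : EqQRing n k)
    | Sum.inr i =>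
        if i.val = n - 1 then X (Sum.inl (Sum.inr i)) + (-1) ^ k * qv n k
        else X (Sum.inl (Sum.inr i))) :
    EqRing n k →ₐ[ℤ] EqQRing n k).toRingHom

section Shat

variable {R : Type*} [CommRing R]

lemma shat_def (e st : ℕ → R) (m : ℕ) :
    shat e st m = st m - ∑ i : Fin m, e (m - i) * shat e st i := by
  rw [shat]

@[simp]
lemma shat_zero (e st : ℕ → R) : shat e st 0 = st 0 := by
  rw [shat_def]; simp

lemma map_shat {S : Type*} [CommRing S] (f : R →+* S) (e st : ℕ → R) (m : ℕ) :
    f (shat e st m) = shat (f ∘ e) (f ∘ st) m := by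
  induction m using Nat.strong_induction_on with
  | _ m ih =>
    rw [shat_def (f ∘ e), shat_def e, map_sub, map_sum]
    simp only [map_mul, ih _ (Fin.is_lt _), Function.comp_apply]

lemma shat_update_of_lt (e st : ℕ → R) {n m : ℕ} (x : R) (hm : m < n) :
    shat (Function.update e n x) st m = shat e st m := by
  induction m using Nat.strong_induction_on with
  | _ m ih =>
    rw [shat_def, shat_def e]
    congr 1
    refine Finset.sum_congr rfl fun i _ => ?_
    rw [Function.update_of_ne (by omega), ih i i.isLt (by omega)]

lemma shat_update_add_self (e st : ℕ → R) (n : ℕ) (c : R) :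
    shat (Function.update e (n + 1) (e (n + 1) + c)) st (n + 1) =
      shat e st (n + 1) - c * st 0 := by
  rw [shat_def, shat_def e, Fin.sum_univ_succ, Fin.sum_univ_succ]
  have hrest : ∀ i : Fin n, Function.update e (n + 1) (e (n + 1) + c) (n + 1 - i.succ) *
      shat (Function.update e (n + 1) (e (n + 1) + c)) st i.succ =
      e (n + 1 - i.succ) * shat e st i.succ := fun i => by
    rw [Function.update_of_ne (by rw [Fin.val_succ]; omega), shat_update_of_lt _ _ _ (by simp)]
  simp only [Finset.sum_congr rfl fun i _ => hrest i, Fin.val_zero, Nat.sub_zero,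
    Function.update_self, shat_zero]
  ring

end Shat

section Determinant

variable {R : Type*} [CommRing R]

lemma det_add_single_zero_last {n : ℕ} (B : Matrix (Fin (n + 1)) (Fin (n + 1)) R) (d : R) :
    (B + Matrix.single 0 (Fin.last n) d).det =
      B.det + (-1) ^ n * d * (B.submatrix Fin.succ Fin.castSucc).det := by
  have hminor : ∀ j : Fin (n + 1), (B + Matrix.single 0 (Fin.last n) d).submatrix Fin.succ
      j.succAbove = B.submatrix Fin.succ j.succAbove := fun j => by
    ext i' j'
    simp [Matrix.single_apply_of_row_ne (Fin.succ_ne_zero i').symm]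
  rw [Matrix.det_succ_row_zero, Matrix.det_succ_row_zero B]
  simp only [hminor, Matrix.add_apply, mul_add, add_mul, Finset.sum_add_distrib]
  congr 1
  rw [Finset.sum_eq_single (Fin.last n)]
  · simp [Fin.succAbove_last]
  · intro j _ hj
    simp [Matrix.single_apply_of_col_ne _ _ hj.symm]
  · simp

lemma det_of_toeplitz_of_neg_eq_zero (s : ℤ → R) (hs : ∀ m < 0, s m = 0) (r : ℕ) :
    (Matrix.of fun i j : Fin r => s (j - i)).det = s 0 ^ r := by
  rw [Matrix.det_of_isUpperTriangular]
  · simp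
  · intro i j hij
    exact hs _ (by simp only [sub_neg, Nat.cast_lt]; exact hij)

end Determinant

section Yhat

variable {R : Type*} [CommRing R]

lemma map_Yhat {S : Type*} [CommRing S] (f : R →+* S) (e st : ℕ → R) (r : ℕ) :
    f (Yhat e st r) = Yhat (f ∘ e) (f ∘ st) r := by
  rw [Yhat, Yhat, RingHom.map_det]
  congr 1
  ext i j
  simp only [RingHom.mapMatrix_apply, Matrix.map_apply, Matrix.of_apply, shatZ]
  split_ifs <;> simp [map_shat]

lemma shatZ_update_of_lt (e st : ℕ → R) {n : ℕ} (x : R) {m : ℤ} (hm : m < n) :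
    shatZ (Function.update e n x) st m = shatZ e st m := by
  unfold shatZ
  split_ifs
  · exact shat_update_of_lt _ _ _ (by omega)
  · rfl

lemma Yhat_update_of_lt (e st : ℕ → R) {n r : ℕ} (x : R) (hr : r < n) :
    Yhat (Function.update e n x) st r = Yhat e st r := by
  unfold Yhat
  congr 1
  ext i j
  exact shatZ_update_of_lt _ _ _ (by omega)

lemma det_submatrix_succ_castSucc_shatZ (e st : ℕ → R) (n : ℕ) :
    ((Matrix.of fun i j : Fin (n + 1) => shatZ e st (1 + (j : ℤ) - i)).submatrix Fin.succ
      Fin.castSucc).det = st 0 ^ n := by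
  have htoeplitz : (Matrix.of fun i j : Fin (n + 1) => shatZ e st (1 + (j : ℤ) - i)).submatrix
      Fin.succ Fin.castSucc = Matrix.of fun i j : Fin n => shatZ e st (j - i) := by
    ext i j
    simp only [Matrix.submatrix_apply, Matrix.of_apply, Fin.val_succ, Fin.val_castSucc]
    congr 1
    push_cast
    ring
  rw [htoeplitz, det_of_toeplitz_of_neg_eq_zero (shatZ e st) fun m hm => if_neg hm.not_ge]
  simp [shatZ]

lemma Yhat_update_add_self (e st : ℕ → R) (n : ℕ) (c : R) :
    Yhat (Function.update e (n + 1) (e (n + 1) + c)) st (n + 1) =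
      Yhat e st (n + 1) + (-1) ^ (n + 1) * c * st 0 ^ (n + 1) := by
  set M := Matrix.of fun i j : Fin (n + 1) => shatZ e st (1 + (j : ℤ) - i)
  have hmatrix : (Matrix.of fun i j : Fin (n + 1) =>
      shatZ (Function.update e (n + 1) (e (n + 1) + c)) st (1 + (j : ℤ) - i)) =
      M + Matrix.single 0 (Fin.last n) (-(c * st 0)) := by
    ext i j
    by_cases hij : i = 0 ∧ j = Fin.last n
    · obtain ⟨rfl, rfl⟩ := hij
      have hidx : 1 + ((Fin.last n : ℕ) : ℤ) - ((0 : Fin (n + 1)) : ℕ) = ((n + 1 : ℕ) : ℤ) := by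
        simp [add_comm]
      simp only [Matrix.of_apply, Matrix.add_apply, Matrix.single_apply_same, M, hidx, shatZ,
        Nat.cast_nonneg, if_true, Int.toNat_natCast, shat_update_add_self]
      ring
    · rw [Matrix.add_apply, Matrix.single_apply, if_neg fun h => hij ⟨h.1.symm, h.2.symm⟩,
        add_zero]
      refine shatZ_update_of_lt _ _ _ ?_
      have hj : (i : ℕ) = 0 → (j : ℕ) ≠ n := fun hi hj => hij ⟨Fin.ext hi, Fin.ext hj⟩
      have := j.is_le
      push_cast
      omega
  rw [Yhat, hmatrix, det_add_single_zero_last, det_submatrix_succ_castSucc_shatZ, Yhat]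
  ring

end Yhat

lemma ftilde_comp_stSrc (n k : ℕ) : ftilde n k ∘ stSrc n k = stTgt n k := by
  funext m
  simp only [Function.comp_apply, stSrc, stTgt]
  split_ifs <;> simp [ftilde]

lemma ftilde_comp_eSrc {n : ℕ} (k : ℕ) (hn : 0 < n) :
    ftilde n k ∘ eSrc n k = Function.update (eTgt n k) n (eTgt n k n + (-1) ^ k * qv n k) := by
  funext i
  simp only [Function.comp_apply, eSrc, eTgt, Function.update_apply]
  split_ifs <;> (try subst_vars) <;> simp [ftilde] <;> omega

theorem ftilde_descends_general (n k : ℕ) :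
    Ideal.span ((Yhat (eSrc n k) (stSrc n k)) '' (Set.Icc (k + 1) n)) ≤
      Ideal.comap (ftilde n k)
        (Ideal.span
          ({Yhat (eTgt n k) (stTgt n k) n + (-1) ^ (n - k) * qv n k} ∪
            (Yhat (eTgt n k) (stTgt n k)) '' (Set.Icc (k + 1) (n - 1)))) := by
  rw [Ideal.span_le]
  rintro _ ⟨r, ⟨hkr, hrn⟩, rfl⟩
  rw [SetLike.mem_coe, Ideal.mem_comap, map_Yhat, ftilde_comp_stSrc,
    ftilde_comp_eSrc k (by omega)]
  rcases hrn.lt_or_eq with hrn | rfl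
  · rw [Yhat_update_of_lt _ _ _ hrn]
    exact Ideal.subset_span (Or.inr ⟨r, ⟨hkr, by omega⟩, rfl⟩)
  · obtain ⟨m, rfl⟩ : ∃ m, r = m + 1 := ⟨r - 1, by omega⟩
    have hsign : (-1 : EqQRing (m + 1) k) ^ (m + 1) * (-1) ^ k = (-1) ^ (m + 1 - k) := by
      rw [← pow_add, show m + 1 + k = m + 1 - k + 2 * k by omega, pow_add, pow_mul, neg_one_sq,
        one_pow, mul_one]
    rw [Yhat_update_add_self, show stTgt (m + 1) k 0 = 1 from if_pos rfl, one_pow, mul_one,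
      ← mul_assoc, hsign]
    exact Ideal.subset_span (Or.inl rfl)

/-- `f̃` maps the relation ideal `(Ŷ_{k+1}, ..., Ŷ_{n-1}, Ŷ_n)` of the equivariant
presentation into the relation ideal `(Ŷ_{k+1}, ..., Ŷ_{n-1}, Ŷ_n + (-1)^{n-k} q)` of
the equivariant quantum presentation, hence descends to a ring homomorphism on the
quotients. -/
theorem ftilde_descends (n k : ℕ) (hkn : k < n) :
    Ideal.span ((Yhat (eSrc n k) (stSrc n k)) '' (Set.Icc (k + 1) n)) ≤
      Ideal.comap (ftilde n k)
        (Ideal.span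
          ({Yhat (eTgt n k) (stTgt n k) n + (-1) ^ (n - k) * qv n k} ∪
            (Yhat (eTgt n k) (stTgt n k)) '' (Set.Icc (k + 1) (n - 1)))) :=
  ftilde_descends_general n k
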